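/- arXiv:0803.2963 — 3 statements merged into one kernel-verified Lean document; each statement's English description precedes it below -/
import Mathlib

section
/- For any integer n ≥ 2, any 1 ≤ n₁ ≤ n − 1 with n₂ = n − n₁, any μ ∈ ℝ and any real numbers ε₁, …, εₙ, one has CV(2) = C(n−1, n₂−1) Σ_{i=1}^n ε_i² − 2 C(n−2, n₁−1) (1/n₁) Σ_{i=1}^n ε_i (Σ_{j≠i} ε_j) + (n₂/n₁²) · (C(n−1, n₁−1) Σ_{i=1}^n ε_i² + 2 C(n−2, n₁−2) Σ_{1 ≤ j₁ < j₂ ≤ n} ε_{j₁} ε_{j₂}), where C(a, b) denotes the binomial coefficient (with C(a, b) = 0 if b < 0). -/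
/-!
Expanding the square, `μ` cancels and each summand of `CV(2)` becomes a combination of
`∑_{i ∉ S} ε_i²`, `∑_{i ∉ S} ∑_{l ∈ S} ε_i ε_l` and `∑_{l, m ∈ S} ε_l ε_m`. Summing over all
`S` of size `n₁` and exchanging the order of summation, each monomial `ε_i²` or `ε_i ε_j` is
counted once for every `S` satisfying the relevant membership conditions, and these counts are
binomial coefficients.
-/

open Finset

namespace Finset

variable {α M : Type*} [DecidableEq α] [AddCommMonoid M]

theorem filter_notMem_powersetCard (u : Finset α) (k : ℕ) (i : α) :
    {S ∈ u.powersetCard k | i ∉ S} = (u.erase i).powersetCard k := by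
  ext S
  simp only [mem_filter, mem_powersetCard, subset_erase]
  tauto

theorem sum_sum_eq_sum_card_nsmul {ι : Type*} {P : Finset ι} {t : ι → Finset α} {T : Finset α}
    (h : ∀ S ∈ P, t S ⊆ T) (f : α → M) :
    ∑ S ∈ P, ∑ x ∈ t S, f x = ∑ x ∈ T, #{S ∈ P | x ∈ t S} • f x := by
  rw [sum_comm' (t' := T) (s' := fun x => {S ∈ P | x ∈ t S})]
  · simp only [sum_const]
  · intro S x
    rw [mem_filter]
    exact ⟨fun hSx => ⟨⟨hSx.1, hSx.2⟩, h _ hSx.1 hSx.2⟩, fun hSx => hSx.1⟩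

theorem card_filter_powersetCard_mem_mem (u : Finset α) (k : ℕ) {l m : α} (hl : l ∈ u)
    (hm : m ∈ u) (hlm : l ≠ m) :
    #{S ∈ u.powersetCard k | l ∈ S ∧ m ∈ S} = if 2 ≤ k then (#u - 2).choose (k - 2) else 0 := by
  have hpair : #({l, m} : Finset α) = 2 := card_pair hlm
  rw [filter_congr (q := ({l, m} ⊆ ·)) fun S _ => by rw [insert_subset_iff, singleton_subset_iff]]
  split_ifs with hk
  · rw [card_filter_powersetCard_subset _ _ _ (by simp [insert_subset_iff, hl, hm]) (by omega),
      hpair]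
  · rw [card_eq_zero, filter_eq_empty_iff]
    intro S hS hlmS
    have := card_le_card hlmS
    rw [hpair, (mem_powersetCard.1 hS).2] at this
    omega

variable (u : Finset α) (k : ℕ)

theorem sum_powersetCard_sum (hk : 1 ≤ k) (f : α → M) :
    ∑ S ∈ u.powersetCard k, ∑ l ∈ S, f l = (#u - 1).choose (k - 1) • ∑ l ∈ u, f l := by
  rw [sum_sum_eq_sum_card_nsmul (fun S hS => (mem_powersetCard.1 hS).1), smul_sum]
  refine sum_congr rfl fun l hl => ?_
  rw [filter_congr (q := ({l} ⊆ ·)) fun S _ => singleton_subset_iff.symm,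
    card_filter_powersetCard_subset _ _ _ (singleton_subset_iff.2 hl) (by simpa), card_singleton]

theorem sum_powersetCard_sum_sdiff (f : α → M) :
    ∑ S ∈ u.powersetCard k, ∑ i ∈ u \ S, f i = (#u - 1).choose k • ∑ i ∈ u, f i := by
  rw [sum_sum_eq_sum_card_nsmul (fun _ _ => sdiff_subset), smul_sum]
  refine sum_congr rfl fun i hi => ?_
  rw [filter_congr (q := (i ∉ ·)) fun S _ => by simp [hi], filter_notMem_powersetCard,
    card_powersetCard, card_erase_of_mem hi]

theorem sum_powersetCard_sum_sdiff_sum (hk : 1 ≤ k) (g : α → α → M) :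
    ∑ S ∈ u.powersetCard k, ∑ i ∈ u \ S, ∑ l ∈ S, g i l
      = (#u - 2).choose (k - 1) • ∑ i ∈ u, ∑ l ∈ u.erase i, g i l := by
  rw [sum_comm' (t' := u) (s' := fun i => (u.erase i).powersetCard k), smul_sum]
  · refine sum_congr rfl fun i hi => ?_
    rw [sum_powersetCard_sum _ _ hk, card_erase_of_mem hi, Nat.sub_sub]
  · intro S i
    rw [← filter_notMem_powersetCard, mem_filter, mem_sdiff]
    tauto

theorem sum_sum_erase_eq_sum_offDiag (s : Finset α) (g : α → α → M) :
    ∑ l ∈ s, ∑ m ∈ s.erase l, g l m = ∑ p ∈ s.offDiag, g p.1 p.2 :=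
  (sum_finset_product' _ _ _ fun p => by rw [mem_offDiag, mem_erase]; tauto).symm

theorem sum_powersetCard_sum_sum_erase (g : α → α → M) :
    ∑ S ∈ u.powersetCard k, ∑ l ∈ S, ∑ m ∈ S.erase l, g l m
      = (if 2 ≤ k then (#u - 2).choose (k - 2) else 0) • ∑ l ∈ u, ∑ m ∈ u.erase l, g l m := by
  simp only [sum_sum_erase_eq_sum_offDiag]
  rw [sum_sum_eq_sum_card_nsmul (fun S hS => offDiag_mono (mem_powersetCard.1 hS).1), smul_sum]
  refine sum_congr rfl fun p hp => ?_
  obtain ⟨hl, hm, hlm⟩ := mem_offDiag.1 hp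
  rw [← card_filter_powersetCard_mem_mem u k hl hm hlm,
    filter_congr fun S _ => by rw [mem_offDiag, and_iff_left hlm]]

theorem sum_powersetCard_sum_sum (hk : 1 ≤ k) (g : α → α → M) :
    ∑ S ∈ u.powersetCard k, ∑ l ∈ S, ∑ m ∈ S, g l m
      = (#u - 1).choose (k - 1) • ∑ l ∈ u, g l l
        + (if 2 ≤ k then (#u - 2).choose (k - 2) else 0) • ∑ l ∈ u, ∑ m ∈ u.erase l, g l m := by
  rw [← sum_powersetCard_sum u k hk, ← sum_powersetCard_sum_sum_erase, ← sum_add_distrib]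
  refine sum_congr rfl fun S _ => ?_
  rw [← sum_add_distrib]
  exact sum_congr rfl fun l hl => (add_sum_erase S (g l) hl).symm

end Finset

theorem sum_range_sum_erase_mul {R : Type*} [CommSemiring R] (n : ℕ) (f : ℕ → R) :
    ∑ i ∈ range n, ∑ j ∈ (range n).erase i, f i * f j
      = 2 * ∑ j ∈ range n, ∑ i ∈ range j, f i * f j := by
  induction n with
  | zero => simp
  | succ n ih =>
    have herase : ∀ i ∈ range n, (range (n + 1)).erase i = insert n ((range n).erase i) := by
      intro i hi
      rw [range_add_one, erase_insert_of_ne (mem_range.1 hi).ne']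
    rw [sum_range_succ, sum_range_succ (fun j => ∑ i ∈ range j, f i * f j),
      sum_congr rfl fun i hi => by rw [herase i hi, sum_insert (by simp)],
      sum_add_distrib, ih, range_add_one, erase_insert (by simp)]
    simp only [mul_comm (f n)]
    ring

theorem sum_sq_sub_mean {α K : Type*} [Field K] [CharZero K] (S T : Finset α)
    (hS : S.Nonempty) (μ : K) (ε : α → K) :
    ∑ i ∈ T, ((μ + ε i) - (1 / (#S : K)) * ∑ l ∈ S, (μ + ε l)) ^ 2
      = ∑ i ∈ T, ε i ^ 2 - 2 * (1 / (#S : K)) * ∑ i ∈ T, ∑ l ∈ S, ε i * ε l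
        + #T * (1 / (#S : K)) ^ 2 * ∑ l ∈ S, ∑ m ∈ S, ε l * ε m := by
  have hS' : (#S : K) ≠ 0 := Nat.cast_ne_zero.2 hS.card_pos.ne'
  have hshift : ∀ i, (μ + ε i) - (1 / (#S : K)) * ∑ l ∈ S, (μ + ε l)
      = ε i - (1 / (#S : K)) * ∑ l ∈ S, ε l := by
    intro i
    rw [sum_add_distrib, sum_const, nsmul_eq_mul]
    field_simp
    ring
  calc _ = ∑ i ∈ T, (ε i ^ 2 - 2 * (1 / (#S : K)) * ∑ l ∈ S, ε i * ε l
          + (1 / (#S : K)) ^ 2 * ((∑ l ∈ S, ε l) * ∑ m ∈ S, ε m)) :=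
        sum_congr rfl fun i _ => by rw [hshift, ← mul_sum]; ring
    _ = _ := by
      rw [sum_add_distrib, sum_sub_distrib, ← mul_sum, sum_const, nsmul_eq_mul, sum_mul_sum]
      ring

theorem cv_two_formula_general (n n₁ : ℕ) (hn₁ : 1 ≤ n₁) (hn₁' : n₁ ≤ n - 1)
    (n₂ : ℕ) (hn₂ : n₂ = n - n₁) (μ : ℝ) (ε : ℕ → ℝ) :
    ∑ S ∈ (Finset.range n).powersetCard n₁, ∑ i ∈ Finset.range n \ S,
        ((μ + ε i) - (1 / (n₁ : ℝ)) * ∑ l ∈ S, (μ + ε l)) ^ 2 =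
      ((n - 1).choose (n₂ - 1) : ℝ) * ∑ i ∈ Finset.range n, (ε i) ^ 2
        - 2 * ((n - 2).choose (n₁ - 1) : ℝ) * (1 / (n₁ : ℝ)) *
            ∑ i ∈ Finset.range n, ε i * ∑ j ∈ (Finset.range n).erase i, ε j
        + ((n₂ : ℝ) / (n₁ : ℝ) ^ 2) *
            (((n - 1).choose (n₁ - 1) : ℝ) * ∑ i ∈ Finset.range n, (ε i) ^ 2
              + 2 * (if 2 ≤ n₁ then ((n - 2).choose (n₁ - 2) : ℝ) else 0) *
                  ∑ j₂ ∈ Finset.range n, ∑ j₁ ∈ Finset.range j₂, ε j₁ * ε j₂) := by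
  have per_subset : ∀ S ∈ (range n).powersetCard n₁,
      ∑ i ∈ range n \ S, ((μ + ε i) - (1 / (n₁ : ℝ)) * ∑ l ∈ S, (μ + ε l)) ^ 2
        = ∑ i ∈ range n \ S, ε i ^ 2 - 2 * (1 / (n₁ : ℝ)) * ∑ i ∈ range n \ S, ∑ l ∈ S, ε i * ε l
          + n₂ * (1 / (n₁ : ℝ)) ^ 2 * ∑ l ∈ S, ∑ m ∈ S, ε l * ε m := by
    intro S hS
    obtain ⟨hSu, hcard⟩ := mem_powersetCard.1 hS
    have hT : #(range n \ S) = n₂ := by rw [card_sdiff_of_subset hSu, card_range, hcard, hn₂]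
    have := sum_sq_sub_mean S (range n \ S) (card_pos.1 (by omega)) μ ε
    rwa [hcard, hT] at this
  have hchoose : (n - 1).choose n₁ = (n - 1).choose (n₂ - 1) := by
    rw [← Nat.choose_symm hn₁']
    congr 1
    omega
  have hcross : ∑ i ∈ range n, ε i * ∑ j ∈ (range n).erase i, ε j
      = 2 * ∑ j ∈ range n, ∑ i ∈ range j, ε i * ε j := by
    rw [← sum_range_sum_erase_mul]
    exact sum_congr rfl fun i _ => mul_sum _ _ _
  rw [sum_congr rfl per_subset, sum_add_distrib, sum_sub_distrib, ← mul_sum, ← mul_sum,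
    sum_powersetCard_sum_sdiff, sum_powersetCard_sum_sdiff_sum _ _ hn₁,
    sum_powersetCard_sum_sum _ _ hn₁, sum_range_sum_erase_mul, hcross, card_range, hchoose]
  simp only [nsmul_eq_mul, sq, Nat.cast_ite, Nat.cast_zero]
  ring

/-- with `Y_i = μ + ε_i` and
`CV(2) = ∑_S ∑_{i ∈ S^c} (Y_i − (1/n₁) ∑_{l ∈ S} Y_l)²` over all subsets `S ⊆ {1,…,n}` of
cardinality `n₁`, one has
`CV(2) = C(n−1, n₂−1) ∑ ε_i² − 2 C(n−2, n₁−1) (1/n₁) ∑_i ε_i (∑_{j≠i} ε_j)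
        + (n₂/n₁²) (C(n−1, n₁−1) ∑ ε_i² + 2 C(n−2, n₁−2) ∑_{j₁<j₂} ε_{j₁} ε_{j₂})`,
with the convention `C(a, b) = 0` if `b < 0` (relevant for `C(n−2, n₁−2)` when `n₁ = 1`). -/
theorem cv_two_formula (n n₁ : ℕ) (hn : 2 ≤ n) (hn₁ : 1 ≤ n₁) (hn₁' : n₁ ≤ n - 1)
    (n₂ : ℕ) (hn₂ : n₂ = n - n₁) (μ : ℝ) (ε : ℕ → ℝ) :
    ∑ S ∈ (Finset.range n).powersetCard n₁, ∑ i ∈ Finset.range n \ S,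
        ((μ + ε i) - (1 / (n₁ : ℝ)) * ∑ l ∈ S, (μ + ε l)) ^ 2 =
      ((n - 1).choose (n₂ - 1) : ℝ) * ∑ i ∈ Finset.range n, (ε i) ^ 2
        - 2 * ((n - 2).choose (n₁ - 1) : ℝ) * (1 / (n₁ : ℝ)) *
            ∑ i ∈ Finset.range n, ε i * ∑ j ∈ (Finset.range n).erase i, ε j
        + ((n₂ : ℝ) / (n₁ : ℝ) ^ 2) *
            (((n - 1).choose (n₁ - 1) : ℝ) * ∑ i ∈ Finset.range n, (ε i) ^ 2
              + 2 * (if 2 ≤ n₁ then ((n - 2).choose (n₁ - 2) : ℝ) else 0) *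
                  ∑ j₂ ∈ Finset.range n, ∑ j₁ ∈ Finset.range j₂, ε j₁ * ε j₂) :=
  cv_two_formula_general n n₁ hn₁ hn₁' n₂ hn₂ μ ε
end

section
/- For any integer n ≥ 2, any 1 ≤ n₁ ≤ n − 1 with n₂ = n − n₁, any μ ∈ ℝ and any real numbers ε₁, …, εₙ, one has CV(1) − CV(2) = C(n−1, n₂−1) · (nμ² + 2μ Σ_{i=1}^n ε_i) − (Σ_{i=1}^n ε_i²) · (n−2)!(n₁+n) / (n₁ · n₁! · (n₂−1)!) + (Σ_{i=1}^n ε_i)² · (n−2)!(n₁+1) / (n₁ · n₁! · (n₂−1)!), where C(a, b) denotes the binomial coefficient. -/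
/-!
For a training set `S` put `W = ∑_{l ∈ S} Y_l`, `V = ∑_{i ∉ S} Y_i` and `T = W + V`. The two inner
sums differ by `2 W V / n₁ - n₂ W² / n₁²`, and `W² = W T - W V`, so only `∑_S W` and `∑_S W V`
are needed. Double counting evaluates them: each `i` lies in `C(n-1, n₁-1)` training sets, and
each ordered pair `l ≠ i` has `l ∈ S`, `i ∉ S` for `C(n-2, n₁-1)` of them, giving
`C(n-1, n₁-1) T` and `C(n-2, n₁-1) (T² - ∑ Y_i²)`.
-/

open Finset

theorem Finset.sum_sq_sub_sum_sub_sq {ι R : Type*} [CommRing R] (t : Finset ι) (y : ι → R)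
    (a : R) :
    ∑ i ∈ t, y i ^ 2 - ∑ i ∈ t, (y i - a) ^ 2 = 2 * a * ∑ i ∈ t, y i - #t * a ^ 2 := by
  rw [← sum_sub_distrib, mul_sum, ← nsmul_eq_mul, ← sum_const, ← sum_sub_distrib]
  exact sum_congr rfl fun i _ => by ring

theorem Nat.choose_sub_two_mul_sub_one {n k : ℕ} (hk : k + 1 < n) :
    (n - 2).choose k * (n - 1) = (n - 1).choose k * (n - (k + 1)) := by
  obtain ⟨q, rfl⟩ : ∃ q, n = q + 2 := ⟨n - 2, by omega⟩
  rw [show q + 2 - (k + 1) = q + 1 - k by omega]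
  exact Nat.choose_mul_succ_eq q k

section
variable {α : Type*} [DecidableEq α]

theorem Finset.sum_powersetCard_sum_sdiff_comm {M : Type*} [AddCommMonoid M] (s : Finset α)
    (k : ℕ) (g : Finset α → α → M) :
    ∑ S ∈ s.powersetCard k, ∑ i ∈ s \ S, g S i =
      ∑ i ∈ s, ∑ S ∈ (s.erase i).powersetCard k, g S i :=
  sum_comm' fun S i => by
    simp only [mem_powersetCard, mem_sdiff, subset_erase]
    tauto

theorem Finset.sum_powersetCard_sum_mem {M : Type*} [AddCommMonoid M] (s : Finset α) (k : ℕ)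
    (f : α → M) :
    ∑ S ∈ s.powersetCard (k + 1), ∑ i ∈ S, f i = (#s - 1).choose k • ∑ i ∈ s, f i := by
  rw [sum_comm' (t' := s) (s' := fun i => (s.powersetCard (k + 1)).filter ({i} ⊆ ·))
    fun S i => by
      simp only [mem_filter, mem_powersetCard, singleton_subset_iff]
      exact ⟨fun h => ⟨⟨h.1, h.2⟩, h.1.1 h.2⟩, fun h => ⟨h.1.1, h.1.2⟩⟩, smul_sum]
  refine sum_congr rfl fun i hi => ?_
  rw [sum_const, card_filter_powersetCard_subset _ _ _ (singleton_subset_iff.2 hi) (by simp),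
    card_singleton, Nat.add_sub_cancel]

theorem Finset.sum_powersetCard_sum_mul_sum_sdiff {R : Type*} [NonUnitalNonAssocSemiring R]
    (s : Finset α) (k : ℕ) (f g : α → R) :
    ∑ S ∈ s.powersetCard (k + 1), (∑ l ∈ S, f l) * ∑ i ∈ s \ S, g i =
      (#s - 2).choose k • ∑ i ∈ s, (∑ l ∈ s.erase i, f l) * g i := by
  simp_rw [mul_sum]
  rw [sum_powersetCard_sum_sdiff_comm, smul_sum]
  refine sum_congr rfl fun i hi => ?_
  rw [← sum_mul, sum_powersetCard_sum_mem, card_erase_of_mem hi, smul_mul_assoc, Nat.sub_sub]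

theorem Finset.sum_sum_erase_mul_eq_sq_sub_sum_sq {R : Type*} [CommRing R] (s : Finset α)
    (y : α → R) :
    ∑ i ∈ s, (∑ l ∈ s.erase i, y l) * y i = (∑ i ∈ s, y i) ^ 2 - ∑ i ∈ s, y i ^ 2 := by
  rw [sq, sum_mul, ← sum_sub_distrib]
  exact sum_congr rfl fun i hi => by rw [sum_erase_eq_sub hi]; ring

noncomputable def cvOne (s : Finset α) (k : ℕ) (Y : α → ℝ) : ℝ :=
  ∑ S ∈ s.powersetCard k, ∑ i ∈ s \ S, Y i ^ 2

noncomputable def cvTwo (s : Finset α) (k : ℕ) (Y : α → ℝ) : ℝ :=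
  ∑ S ∈ s.powersetCard k, ∑ i ∈ s \ S, (Y i - 1 / (k : ℝ) * ∑ l ∈ S, Y l) ^ 2

theorem cvOne_sub_cvTwo (s : Finset α) {k : ℕ} (hk : k + 1 < #s) (Y : α → ℝ) :
    cvOne s (k + 1) Y - cvTwo s (k + 1) Y =
      (#s - 2).choose k * ((k + 2) * (∑ i ∈ s, Y i) ^ 2 - (#s + k + 1) * ∑ i ∈ s, Y i ^ 2)
        / (k + 1) ^ 2 := by
  set T := ∑ i ∈ s, Y i
  set c : ℝ := 1 / ((k + 1 : ℕ) : ℝ)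
  have hS : ∀ S ∈ s.powersetCard (k + 1),
      ∑ i ∈ s \ S, Y i ^ 2 - ∑ i ∈ s \ S, (Y i - c * ∑ l ∈ S, Y l) ^ 2 =
        (2 * c + (#s - (k + 1)) * c ^ 2) * ((∑ l ∈ S, Y l) * ∑ i ∈ s \ S, Y i)
          - (#s - (k + 1)) * c ^ 2 * T * ∑ l ∈ S, Y l := by
    intro S hS
    obtain ⟨hSs, hcard⟩ := mem_powersetCard.1 hS
    have hV : ∑ i ∈ s \ S, Y i = T - ∑ l ∈ S, Y l := eq_sub_of_add_eq (sum_sdiff hSs)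
    rw [sum_sq_sub_sum_sub_sq, card_sdiff_of_subset hSs, hcard, Nat.cast_sub hk.le, hV]
    push_cast
    ring
  have hchoose : ((#s - 2).choose k : ℝ) * (#s - 1) = (#s - 1).choose k * (#s - (k + 1)) := by
    have := congrArg (Nat.cast (R := ℝ)) (Nat.choose_sub_two_mul_sub_one hk)
    push_cast [Nat.cast_sub hk.le, Nat.cast_sub (by omega : 1 ≤ #s)] at this
    exact this
  unfold cvOne cvTwo
  rw [← sum_sub_distrib, sum_congr rfl hS, sum_sub_distrib, ← mul_sum, ← mul_sum,
    sum_powersetCard_sum_mul_sum_sdiff, sum_powersetCard_sum_mem,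
    sum_sum_erase_mul_eq_sq_sub_sum_sq]
  simp only [c, nsmul_eq_mul]
  push_cast
  field_simp
  linear_combination T ^ 2 * hchoose

end

theorem cv_difference_formula_general (n n₁ : ℕ) (hn₁ : 1 ≤ n₁) (hn₁' : n₁ ≤ n - 1)
    (n₂ : ℕ) (hn₂ : n₂ = n - n₁) (μ : ℝ) (ε : ℕ → ℝ) :
    (∑ S ∈ (Finset.range n).powersetCard n₁, ∑ i ∈ Finset.range n \ S, (μ + ε i) ^ 2)
      - ∑ S ∈ (Finset.range n).powersetCard n₁, ∑ i ∈ Finset.range n \ S,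
          ((μ + ε i) - (1 / (n₁ : ℝ)) * ∑ l ∈ S, (μ + ε l)) ^ 2 =
      ((n - 1).choose (n₂ - 1) : ℝ) * (n * μ ^ 2 + 2 * μ * ∑ i ∈ Finset.range n, ε i)
        - (∑ i ∈ Finset.range n, (ε i) ^ 2) *
            (((n - 2).factorial : ℝ) * (n₁ + n)) /
              ((n₁ : ℝ) * (n₁.factorial : ℝ) * ((n₂ - 1).factorial : ℝ))
        + (∑ i ∈ Finset.range n, ε i) ^ 2 *
            (((n - 2).factorial : ℝ) * (n₁ + 1)) /
              ((n₁ : ℝ) * (n₁.factorial : ℝ) * ((n₂ - 1).factorial : ℝ)) := by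
  obtain ⟨m, rfl⟩ : ∃ m, n₁ = m + 1 := ⟨n₁ - 1, by omega⟩
  obtain ⟨r, rfl⟩ : ∃ r, n = m + r + 2 := ⟨n - m - 2, by omega⟩
  obtain rfl : n₂ = r + 1 := by omega
  have hT : ∑ i ∈ range (m + r + 2), (μ + ε i) =
      (m + r + 2) * μ + ∑ i ∈ range (m + r + 2), ε i := by
    simp [sum_add_distrib]
  have hQ : ∑ i ∈ range (m + r + 2), (μ + ε i) ^ 2 = (m + r + 2) * μ ^ 2
      + 2 * μ * ∑ i ∈ range (m + r + 2), ε i + ∑ i ∈ range (m + r + 2), ε i ^ 2 := by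
    simp [add_sq, sum_add_distrib, mul_sum]
  change cvOne (range _) (m + 1) (μ + ε ·) - cvTwo (range _) (m + 1) (μ + ε ·) = _
  rw [cvOne_sub_cvTwo _ (by simp), hT, hQ, card_range,
    show m + r + 2 - 1 = r + (m + 1) by omega, show m + r + 2 - 2 = m + r by omega,
    Nat.add_sub_cancel, Nat.cast_add_choose, Nat.cast_add_choose,
    show r + (m + 1) = m + r + 1 by omega]
  push_cast [Nat.factorial_succ]
  field_simp
  ring

/-- with `Y_i = μ + ε_i`,
`CV(1) = ∑_S ∑_{i ∈ S^c} Y_i²` and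
`CV(2) = ∑_S ∑_{i ∈ S^c} (Y_i − (1/n₁) ∑_{l ∈ S} Y_l)²` (over all `S ⊆ {1,…,n}`
of cardinality `n₁`), one has
`CV(1) − CV(2) = C(n−1, n₂−1) (n μ² + 2 μ ∑ ε_i)
  − (∑ ε_i²) (n−2)! (n₁+n) / (n₁ n₁! (n₂−1)!)
  + (∑ ε_i)² (n−2)! (n₁+1) / (n₁ n₁! (n₂−1)!)`. -/
theorem cv_difference_formula (n n₁ : ℕ) (hn : 2 ≤ n) (hn₁ : 1 ≤ n₁) (hn₁' : n₁ ≤ n - 1)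
    (n₂ : ℕ) (hn₂ : n₂ = n - n₁) (μ : ℝ) (ε : ℕ → ℝ) :
    (∑ S ∈ (Finset.range n).powersetCard n₁, ∑ i ∈ Finset.range n \ S, (μ + ε i) ^ 2)
      - ∑ S ∈ (Finset.range n).powersetCard n₁, ∑ i ∈ Finset.range n \ S,
          ((μ + ε i) - (1 / (n₁ : ℝ)) * ∑ l ∈ S, (μ + ε l)) ^ 2 =
      ((n - 1).choose (n₂ - 1) : ℝ) * (n * μ ^ 2 + 2 * μ * ∑ i ∈ Finset.range n, ε i)
        - (∑ i ∈ Finset.range n, (ε i) ^ 2) *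
            (((n - 2).factorial : ℝ) * (n₁ + n)) /
              ((n₁ : ℝ) * (n₁.factorial : ℝ) * ((n₂ - 1).factorial : ℝ))
        + (∑ i ∈ Finset.range n, ε i) ^ 2 *
            (((n - 2).factorial : ℝ) * (n₁ + 1)) /
              ((n₁ : ℝ) * (n₁.factorial : ℝ) * ((n₂ - 1).factorial : ℝ)) :=
  cv_difference_formula_general n n₁ hn₁ hn₁' n₂ hn₂ μ ε
end

section
/- For any integer n ≥ 2, any 1 ≤ n₁ ≤ n − 1 with n₂ = n − n₁, and any real numbers ε₁, …, εₙ, when μ = 0 the inequality CV(1) − CV(2) > 0 holds if and only if ((n−1) n₁ / n) (Σ_{i=1}^n ε_i)² > (n + n₁) Σ_{j=1}^n (ε_j − ε̄)², where ε̄ = (1/n) Σ_{i=1}^n ε_i. -/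
/-!
Write `A_S = ∑_{l ∈ S} ε_l` and `T = ∑ ε_i`. For a single `n₁`-subset `S`, the contribution of
`S` to `CV(1) − CV(2)` is `2 T A_S / n₁ − (n + n₁) A_S² / n₁²`, so the difference only involves
the first two moments of `A_S` over all `n₁`-subsets. These follow by double counting, since a
fixed `m`-set lies in exactly `C(n, n₁) C(n₁, m) / C(n, m)` of the `n₁`-subsets. The outcome is
`n₁ n (n − 1) (CV(1) − CV(2)) = C(n, n₁) (n − n₁) ((n₁ + 1) T² − (n + n₁) ∑ ε_i²)`, and
`n ∑ (ε_j − ε̄)² = n ∑ ε_i² − T²` turns the sign of the last factor into the stated inequality.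
-/

open Finset

namespace Finset

variable {ι R K : Type*}

theorem card_mul_sum_sub_mean_sq [Field K] {U : Finset ι} (hU : (#U : K) ≠ 0) (x : ι → K) :
    #U * ∑ j ∈ U, (x j - 1 / #U * ∑ i ∈ U, x i) ^ 2
      = #U * ∑ i ∈ U, x i ^ 2 - (∑ i ∈ U, x i) ^ 2 := by
  set c := 1 / (#U : K) * ∑ i ∈ U, x i
  have hc : #U * c = ∑ i ∈ U, x i := by rw [← mul_assoc, mul_one_div_cancel hU, one_mul]
  simp only [sub_sq, sum_add_distrib, sum_sub_distrib, ← sum_mul, ← mul_sum, sum_const,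
    nsmul_eq_mul]
  linear_combination (#U * c - ∑ i ∈ U, x i) * hc

variable [DecidableEq ι]

theorem card_filter_powersetCard_superset_mul_descFactorial {s U : Finset ι} (hs : s ⊆ U)
    (k : ℕ) :
    #{S ∈ U.powersetCard k | s ⊆ S} * (#U).descFactorial #s
      = (#U).choose k * k.descFactorial #s := by
  rcases le_or_gt #s k with hsk | hks
  · rw [card_filter_powersetCard_subset s U k hs hsk, Nat.descFactorial_eq_factorial_mul_choose,
      Nat.descFactorial_eq_factorial_mul_choose, mul_left_comm, mul_left_comm _ (#s).factorial,
      mul_comm ((#U - #s).choose _), Nat.choose_mul hsk]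
  · rw [Nat.descFactorial_eq_zero_iff_lt.2 hks, mul_zero, card_eq_zero.2, zero_mul]
    refine filter_false_of_mem fun S hS hsS => ?_
    exact absurd (card_le_card hsS) (by rw [(mem_powersetCard.1 hS).2]; omega)

theorem card_filter_powersetCard_mem_mul_card {U : Finset ι} {i : ι} (hi : i ∈ U) (k : ℕ) :
    #{S ∈ U.powersetCard k | i ∈ S} * #U = (#U).choose k * k := by
  simpa only [singleton_subset_iff, card_singleton, Nat.descFactorial_one] using
    card_filter_powersetCard_superset_mul_descFactorial (singleton_subset_iff.2 hi) k

theorem card_mul_card_sub_one_mul_card_filter_mem_mem [CommRing R] {U : Finset ι} {i j : ι}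
    (hi : i ∈ U) (hj : j ∈ U) (k : ℕ) :
    (#U * (#U - 1) * #{S ∈ U.powersetCard k | i ∈ S ∧ j ∈ S} : R)
      = k * (#U).choose k * ((k - 1) + if i = j then (#U - k : R) else 0) := by
  by_cases hij : i = j
  · subst hij
    simp only [and_self, if_true]
    rw [mul_right_comm, ← Nat.cast_mul, mul_comm (#U), card_filter_powersetCard_mem_mul_card hi k]
    push_cast
    ring
  · have hcount := card_filter_powersetCard_superset_mul_descFactorial
      (insert_subset hi (singleton_subset_iff.2 hj)) k
    simp only [insert_subset_iff, singleton_subset_iff, card_pair hij] at hcount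
    rw [if_neg hij, add_zero, ← Nat.cast_descFactorial_two, mul_comm, ← Nat.cast_mul, hcount,
      Nat.cast_mul, Nat.cast_descFactorial_two]
    ring

theorem sum_sum_comm_of_subset {M : Type*} [AddCommMonoid M] {𝒜 : Finset (Finset ι)}
    {U : Finset ι} (h𝒜 : ∀ S ∈ 𝒜, S ⊆ U) (g : Finset ι → ι → M) :
    ∑ S ∈ 𝒜, ∑ i ∈ S, g S i = ∑ i ∈ U, ∑ S ∈ 𝒜 with i ∈ S, g S i :=
  sum_comm' fun S i => by
    simp only [mem_filter]
    exact ⟨fun ⟨hS, hi⟩ => ⟨⟨hS, hi⟩, h𝒜 S hS hi⟩, fun ⟨hSi, _⟩ => hSi⟩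

theorem card_mul_sum_powersetCard_sum [CommSemiring R] (U : Finset ι) (k : ℕ) (f : ι → R) :
    #U * ∑ S ∈ U.powersetCard k, ∑ i ∈ S, f i = k * (#U).choose k * ∑ i ∈ U, f i := by
  rw [sum_sum_comm_of_subset (fun S hS => (mem_powersetCard.1 hS).1), mul_sum, mul_sum]
  refine sum_congr rfl fun i hi => ?_
  rw [sum_const, nsmul_eq_mul, ← mul_assoc, mul_comm (#U : R), ← Nat.cast_mul,
    card_filter_powersetCard_mem_mul_card hi k]
  push_cast
  ring

theorem card_mul_card_sub_one_mul_sum_powersetCard_sq [CommRing R] (U : Finset ι) (k : ℕ)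
    (f : ι → R) :
    #U * (#U - 1) * ∑ S ∈ U.powersetCard k, (∑ i ∈ S, f i) ^ 2
      = k * (#U).choose k * ((#U - k) * ∑ i ∈ U, f i ^ 2 + (k - 1) * (∑ i ∈ U, f i) ^ 2) := by
  have hsub : ∀ S ∈ U.powersetCard k, S ⊆ U := fun S hS => (mem_powersetCard.1 hS).1
  have hpairs : ∑ S ∈ U.powersetCard k, (∑ i ∈ S, f i) ^ 2
      = ∑ i ∈ U, ∑ j ∈ U, #{S ∈ U.powersetCard k | i ∈ S ∧ j ∈ S} • (f i * f j) := by
    simp_rw [sq, sum_mul_sum]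
    rw [sum_sum_comm_of_subset hsub]
    refine sum_congr rfl fun i _ => ?_
    rw [sum_sum_comm_of_subset fun S hS => hsub S (mem_filter.1 hS).1]
    simp only [sum_const, filter_filter]
  rw [hpairs]
  calc (#U * (#U - 1) : R) * ∑ i ∈ U, ∑ j ∈ U,
          #{S ∈ U.powersetCard k | i ∈ S ∧ j ∈ S} • (f i * f j)
      = ∑ i ∈ U, ∑ j ∈ U, k * (#U).choose k *
          ((k - 1) + if i = j then (#U - k : R) else 0) * (f i * f j) := by
        rw [mul_sum]
        refine sum_congr rfl fun i hi => ?_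
        rw [mul_sum]
        refine sum_congr rfl fun j hj => ?_
        rw [nsmul_eq_mul, ← mul_assoc, card_mul_card_sub_one_mul_card_filter_mem_mem hi hj k]
    _ = _ := by
        simp only [mul_add, add_mul, ite_mul, zero_mul, mul_ite, mul_zero, sum_add_distrib,
          sum_ite_eq]
        rw [sum_ite_mem, inter_self, sq, sum_mul_sum]
        simp only [← mul_sum, sq]
        ring

theorem mul_card_mul_card_sub_one_mul_sum_powersetCard_sdiff [Field K] {k : ℕ}
    (hk : (k : K) ≠ 0) (U : Finset ι) (x : ι → K) :
    k * #U * (#U - 1) * (∑ S ∈ U.powersetCard k, ∑ i ∈ U \ S, x i ^ 2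
        - ∑ S ∈ U.powersetCard k, ∑ i ∈ U \ S, (x i - 1 / k * ∑ l ∈ S, x l) ^ 2)
      = (#U).choose k * (#U - k)
          * ((k + 1) * (∑ i ∈ U, x i) ^ 2 - (#U + k) * ∑ i ∈ U, x i ^ 2) := by
  have hterm : ∀ S ∈ U.powersetCard k,
      ∑ i ∈ U \ S, x i ^ 2 - ∑ i ∈ U \ S, (x i - 1 / k * ∑ l ∈ S, x l) ^ 2
        = 2 / k * (∑ i ∈ U, x i) * (∑ l ∈ S, x l) - (#U + k) / k ^ 2 * (∑ l ∈ S, x l) ^ 2 := by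
    intro S hS
    obtain ⟨hSU, hSk⟩ := mem_powersetCard.1 hS
    simp only [sub_sq, sum_add_distrib, sum_sub_distrib, ← sum_mul, ← mul_sum, sum_const,
      nsmul_eq_mul, sum_sdiff_eq_sub hSU, hSk]
    field_simp
    ring
  rw [← sum_sub_distrib, sum_congr rfl hterm, sum_sub_distrib, ← mul_sum, ← mul_sum]
  have h1 := card_mul_sum_powersetCard_sum U k x
  have h2 := card_mul_card_sub_one_mul_sum_powersetCard_sq U k x
  field_simp
  linear_combination (2 * k * (#U - 1) * ∑ i ∈ U, x i) * h1 - (#U + k) * h2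

end Finset

theorem cv_difference_pos_iff_general (n n₁ : ℕ) (hn₁ : 1 ≤ n₁) (hn₁' : n₁ ≤ n - 1) (ε : ℕ → ℝ) :
    (0 <
      (∑ S ∈ (Finset.range n).powersetCard n₁, ∑ i ∈ Finset.range n \ S, (ε i) ^ 2)
        - ∑ S ∈ (Finset.range n).powersetCard n₁, ∑ i ∈ Finset.range n \ S,
            (ε i - (1 / (n₁ : ℝ)) * ∑ l ∈ S, ε l) ^ 2) ↔
      ((n : ℝ) + n₁) *
          ∑ j ∈ Finset.range n, (ε j - (1 / (n : ℝ)) * ∑ i ∈ Finset.range n, ε i) ^ 2 <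
        (((n : ℝ) - 1) * n₁ / n) * (∑ i ∈ Finset.range n, ε i) ^ 2 := by
  have hk : (1 : ℝ) ≤ n₁ := by exact_mod_cast hn₁
  have hkn : (n₁ : ℝ) + 1 ≤ n := by exact_mod_cast (by omega : n₁ + 1 ≤ n)
  have hn : (0 : ℝ) < n := by linarith
  have hcv := mul_card_mul_card_sub_one_mul_sum_powersetCard_sdiff (by positivity) (range n) ε
  have hdev := card_mul_sum_sub_mean_sq (U := range n) (by simp; omega) ε
  simp only [card_range] at hcv hdev
  have hscale : (0 : ℝ) < n₁ * n * (n - 1) := mul_pos (by positivity) (by linarith)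
  have hchoose : (0 : ℝ) < n.choose n₁ * (n - n₁) :=
    mul_pos (by exact_mod_cast Nat.choose_pos (by omega)) (by linarith)
  rw [← mul_pos_iff_of_pos_left hscale, hcv, mul_pos_iff_of_pos_left hchoose, sub_pos,
    div_mul_eq_mul_div (((n : ℝ) - 1) * n₁), lt_div_iff₀ hn]
  constructor <;> intro h <;> nlinarith

/-- when `μ = 0` (so `Y_i = ε_i`), the inequality `CV(1) − CV(2) > 0` holds
if and only if `((n−1) n₁ / n) (∑ ε_i)² > (n + n₁) ∑_j (ε_j − ε̄)²`, where
`ε̄ = (1/n) ∑ ε_i`. -/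
theorem cv_difference_pos_iff (n n₁ : ℕ) (hn : 2 ≤ n) (hn₁ : 1 ≤ n₁) (hn₁' : n₁ ≤ n - 1)
    (n₂ : ℕ) (hn₂ : n₂ = n - n₁) (ε : ℕ → ℝ) :
    (0 <
      (∑ S ∈ (Finset.range n).powersetCard n₁, ∑ i ∈ Finset.range n \ S, (ε i) ^ 2)
        - ∑ S ∈ (Finset.range n).powersetCard n₁, ∑ i ∈ Finset.range n \ S,
            (ε i - (1 / (n₁ : ℝ)) * ∑ l ∈ S, ε l) ^ 2) ↔
      ((n : ℝ) + n₁) *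
          ∑ j ∈ Finset.range n, (ε j - (1 / (n : ℝ)) * ∑ i ∈ Finset.range n, ε i) ^ 2 <
        (((n : ℝ) - 1) * n₁ / n) * (∑ i ∈ Finset.range n, ε i) ^ 2 :=
  cv_difference_pos_iff_general n n₁ hn₁ hn₁' ε
end
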